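/- (Dimension-independent global certificate for rational functions.) Let p and q be polynomials in n variables of degree l ≥ 2, with b_α(q,k,Δ) > 0 for all |α| = k, and let f = p/q with rational Bernstein coefficients b_α(f,k,Δ) = b_α(p,k,Δ)/b_α(q,k,Δ). Suppose f(x) > 0 and q(x) > 0 for all x ∈ Δ, so that p(x) > 0 on Δ with minimum p̲ = min_{x∈Δ} p(x). If k > ( l(l−1)/2 ) · ( max_{|α|=l} |b_α(p,l,Δ)| ) / p̲, then b_α(f,k,Δ) > 0 for all |α| = k; i.e. f satisfies the global certificate of positivity at degree k, by a bound not depending on the dimension n. -/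

import Mathlib

open Finset

noncomputable section

/-- The standard simplex Δ in ℝⁿ. -/
def stdSimp (n : ℕ) : Set (Fin n → ℝ) :=
  {x | (∀ i, 0 ≤ x i) ∧ ∑ i, x i ≤ 1}

/-- Multi-indices α ∈ ℕ^{n+1} with |α| = k. -/
def multIdx (n k : ℕ) : Finset (Fin (n+1) → ℕ) :=
  Finset.Nat.antidiagonalTuple (n+1) k

lemma multIdx_nonempty (n k : ℕ) : (multIdx n k).Nonempty :=
  ⟨fun i => if i = 0 then k else 0, by
    simp [multIdx, Finset.Nat.mem_antidiagonalTuple]⟩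

/-- Bernstein basis polynomial of degree k on the standard simplex. -/
def bern (n k : ℕ) (α : Fin (n+1) → ℕ) (x : Fin n → ℝ) : ℝ :=
  ((k.factorial : ℝ) / ∏ i, ((α i).factorial : ℝ)) *
    (∏ i : Fin n, x i ^ α i.succ) * (1 - ∑ i, x i) ^ α 0

/-- i-th standard unit multi-index. -/
def unitIdx (n : ℕ) (i : Fin (n+1)) : Fin (n+1) → ℕ :=
  fun j => if j = i then 1 else 0

/-- vertex multi-index k·eᵢ -/
def vertIdx (n k : ℕ) (i : Fin (n+1)) : Fin (n+1) → ℕ :=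
  fun j => if j = i then k else 0

/-- second difference -/
def secondDiff (n : ℕ) (b : (Fin (n+1) → ℕ) → ℝ) (γ : Fin (n+1) → ℕ)
    (i j : Fin (n+1)) : ℝ :=
  b (γ + unitIdx n i + unitIdx n (j - 1)) + b (γ + unitIdx n (i - 1) + unitIdx n j)
    - b (γ + unitIdx n (i - 1) + unitIdx n (j - 1)) - b (γ + unitIdx n i + unitIdx n j)

/-!
Degree elevation writes the degree-`k` Bernstein coefficient of `p` at `α` as an average of the
degree-`l` coefficients `b_β` with weights `∏ C(αᵢ, βᵢ) / C(k, l)`, while `p(α / k)` is the average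
of the same coefficients with weights `multinomial β · ∏ (αᵢ / k) ^ βᵢ`. After multiplying by
`k^(l)` (falling factorial) and `k ^ l` respectively, the weights differ only in falling versus
ordinary powers of the `αᵢ`, so their total discrepancy is `k ^ l - k^(l) ≤ C(l, 2) k ^ (l - 1)`.
Hence `k^(l) b_α(p) ≥ k ^ (l - 1) (k min p - C(l, 2) max |b_β|) > 0`, and dividing by the positive
coefficient of `q` gives the claim.
-/

lemma mem_multIdx {n k : ℕ} {α : Fin (n+1) → ℕ} : α ∈ multIdx n k ↔ ∑ i, α i = k := by
  simp [multIdx, Finset.Nat.mem_antidiagonalTuple]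

lemma multIdx_eq_piAntidiag (n k : ℕ) : multIdx n k = piAntidiag univ k := by
  ext α; simp [mem_multIdx, mem_piAntidiag]

lemma sum_multinomial_mul_prod_pow {R : Type*} [CommSemiring R] {n : ℕ} (l : ℕ)
    (t : Fin (n+1) → R) :
    ∑ β ∈ multIdx n l, (Nat.multinomial univ β : R) * ∏ i, t i ^ β i = (∑ i, t i) ^ l := by
  rw [multIdx_eq_piAntidiag, sum_pow_eq_sum_piAntidiag]

def baryCoord {n : ℕ} (x : Fin n → ℝ) : Fin (n+1) → ℝ :=
  Fin.cons (1 - ∑ i, x i) x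

lemma sum_baryCoord {n : ℕ} (x : Fin n → ℝ) : ∑ i, baryCoord x i = 1 := by
  simp [baryCoord, Fin.sum_univ_succ]

lemma cast_multinomial {n k : ℕ} {α : Fin (n+1) → ℕ} (hα : α ∈ multIdx n k) :
    (Nat.multinomial univ α : ℝ) = (k.factorial : ℝ) / ∏ i, ((α i).factorial : ℝ) := by
  have hspec := Nat.multinomial_spec univ α
  rw [mem_multIdx.mp hα] at hspec
  rw [eq_div_iff (by positivity), mul_comm]
  exact_mod_cast hspec

lemma bern_eq_multinomial_mul_prod {n k : ℕ} {α : Fin (n+1) → ℕ} (hα : α ∈ multIdx n k)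
    (x : Fin n → ℝ) :
    bern n k α x = Nat.multinomial univ α * ∏ i, baryCoord x i ^ α i := by
  rw [bern, cast_multinomial hα, Fin.prod_univ_succ (fun i => baryCoord x i ^ α i)]
  simp only [baryCoord, Fin.cons_zero, Fin.cons_succ]
  ring

lemma sum_bern (n k : ℕ) (x : Fin n → ℝ) : ∑ α ∈ multIdx n k, bern n k α x = 1 := by
  calc ∑ α ∈ multIdx n k, bern n k α x
      = ∑ α ∈ multIdx n k, (Nat.multinomial univ α : ℝ) * ∏ i, baryCoord x i ^ α i :=
        sum_congr rfl fun α hα => bern_eq_multinomial_mul_prod hα x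
    _ = 1 := by rw [sum_multinomial_mul_prod_pow, sum_baryCoord, one_pow]

lemma bern_nonneg {n k : ℕ} (α : Fin (n+1) → ℕ) {x : Fin n → ℝ} (hx : x ∈ stdSimp n) :
    0 ≤ bern n k α x := by
  obtain ⟨hx, hsum⟩ := hx
  have hx0 : 0 ≤ 1 - ∑ i, x i := sub_nonneg.mpr hsum
  unfold bern
  have := prod_nonneg fun i (_ : i ∈ univ) => pow_nonneg (hx i) (α i.succ)
  positivity

lemma sum_mul_bern_le {n k : ℕ} {b : (Fin (n+1) → ℕ) → ℝ} {M : ℝ}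
    (hb : ∀ α ∈ multIdx n k, |b α| ≤ M) {x : Fin n → ℝ} (hx : x ∈ stdSimp n) :
    ∑ α ∈ multIdx n k, b α * bern n k α x ≤ M := by
  calc ∑ α ∈ multIdx n k, b α * bern n k α x
      ≤ ∑ α ∈ multIdx n k, M * bern n k α x := by
        gcongr with α hα
        · exact bern_nonneg α hx
        · exact (le_abs_self _).trans (hb α hα)
    _ = M := by rw [← mul_sum, sum_bern, mul_one]

lemma bern_mul_bern {n : ℕ} (l m : ℕ) (β γ : Fin (n+1) → ℕ) (x : Fin n → ℝ) :
    bern n l β x * bern n m γ x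
      = (∏ i, ((β i + γ i).choose (β i) : ℝ)) / ((l + m).choose l : ℝ)
        * bern n (l + m) (β + γ) x := by
  simp only [bern, Nat.cast_choose ℝ (Nat.le_add_right _ _), Nat.add_sub_cancel_left,
    Pi.add_apply, pow_add, prod_mul_distrib, prod_div_distrib]
  field_simp

def elevWeight {n : ℕ} (l k : ℕ) (α β : Fin (n+1) → ℕ) : ℝ :=
  (∏ i, ((α i).choose (β i) : ℝ)) / (k.choose l : ℝ)

def elevate {n : ℕ} (l k : ℕ) (b : (Fin (n+1) → ℕ) → ℝ) (α : Fin (n+1) → ℕ) : ℝ :=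
  ∑ β ∈ multIdx n l, b β * elevWeight l k α β

lemma image_add_multIdx {n l m : ℕ} {β : Fin (n+1) → ℕ} (hβ : β ∈ multIdx n l) :
    (multIdx n m).image (β + ·) = {α ∈ multIdx n (l + m) | ∀ i, β i ≤ α i} := by
  ext α
  simp only [mem_image, mem_filter, mem_multIdx] at hβ ⊢
  constructor
  · rintro ⟨γ, hγ, rfl⟩
    simp [sum_add_distrib, hβ, hγ]
  · rintro ⟨hα, hβα⟩
    refine ⟨α - β, ?_, add_tsub_cancel_of_le (Pi.le_def.mpr hβα)⟩
    have : ∑ i, (α - β) i + ∑ i, β i = ∑ i, α i := by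
      rw [← sum_add_distrib]
      exact sum_congr rfl fun i _ => tsub_add_cancel_of_le (hβα i)
    omega

lemma bern_eq_sum_elevWeight_mul_bern {n l k : ℕ} (hlk : l ≤ k) {β : Fin (n+1) → ℕ}
    (hβ : β ∈ multIdx n l) (x : Fin n → ℝ) :
    bern n l β x = ∑ α ∈ multIdx n k, elevWeight l k α β * bern n k α x := by
  obtain ⟨m, rfl⟩ := Nat.exists_eq_add_of_le hlk
  have hvanish : ∀ α ∈ multIdx n (l + m), elevWeight l (l + m) α β * bern n (l + m) α x ≠ 0 →
      ∀ i, β i ≤ α i := by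
    intro α _ hne i
    by_contra hlt
    refine hne ?_
    rw [elevWeight, prod_eq_zero (mem_univ i) (by simp [Nat.choose_eq_zero_of_lt (not_le.mp hlt)])]
    simp
  rw [← sum_filter_of_ne hvanish, ← image_add_multIdx hβ,
    sum_image fun _ _ _ _ h => add_left_cancel h]
  simp only [elevWeight, Pi.add_apply, ← bern_mul_bern, ← mul_sum, sum_bern, mul_one]

lemma sum_mul_bern_eq_sum_elevate_mul_bern {n l k : ℕ} (hlk : l ≤ k)
    (b : (Fin (n+1) → ℕ) → ℝ) (x : Fin n → ℝ) :
    ∑ β ∈ multIdx n l, b β * bern n l β x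
      = ∑ α ∈ multIdx n k, elevate l k b α * bern n k α x := by
  simp only [elevate, sum_mul, mul_assoc]
  rw [sum_comm]
  refine sum_congr rfl fun β hβ => ?_
  rw [bern_eq_sum_elevWeight_mul_bern hlk hβ x, mul_sum]

lemma tail_injOn_multIdx (n k : ℕ) :
    Set.InjOn (Fin.tail : (Fin (n+1) → ℕ) → Fin n → ℕ) (multIdx n k) := by
  intro α hα β hβ h
  rw [SetLike.mem_coe, mem_multIdx, Fin.sum_univ_succ] at hα hβ
  rw [← Fin.cons_self_tail α, ← Fin.cons_self_tail β, h]
  have : ∑ i, Fin.tail α i = ∑ i, Fin.tail β i := by rw [h]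
  simp only [Fin.tail] at this
  congr 1
  omega

lemma bern_inv_smul {n k : ℕ} {α : Fin (n+1) → ℕ} (hα : α ∈ multIdx n k) {y : Fin n → ℝ}
    (hy : 1 + ∑ i, y i ≠ 0) :
    bern n k α ((1 + ∑ i, y i)⁻¹ • y)
      = (1 + ∑ i, y i)⁻¹ ^ k * (Nat.multinomial univ α * ∏ i, y i ^ Fin.tail α i) := by
  set S := 1 + ∑ i, y i
  have hbary : baryCoord (S⁻¹ • y) = S⁻¹ • Fin.cons 1 y := by
    have hsum : 1 - ∑ i, S⁻¹ * y i = S⁻¹ * 1 := by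
      rw [← mul_sum]; field_simp; ring
    ext i
    refine Fin.cases ?_ (fun i => ?_) i <;> simp [baryCoord, hsum]
  rw [bern_eq_multinomial_mul_prod hα, hbary]
  simp only [Pi.smul_apply, smul_eq_mul, mul_pow, prod_mul_distrib, prod_pow_eq_pow_sum,
    mem_multIdx.mp hα, Fin.prod_univ_succ, Fin.cons_zero, Fin.cons_succ, one_pow, one_mul]
  exact mul_left_comm _ _ _

lemma eq_zero_of_sum_mul_bern_eq_zero {n k : ℕ} {c : (Fin (n+1) → ℕ) → ℝ}
    (hc : ∀ x, ∑ α ∈ multIdx n k, c α * bern n k α x = 0) :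
    ∀ α ∈ multIdx n k, c α = 0 := by
  -- Substituting `x = y / (1 + ∑ yᵢ)` turns the expansion into `(1 + ∑ yᵢ)⁻ᵏ` times `P(y)`.
  let P : MvPolynomial (Fin n) ℝ := ∑ α ∈ multIdx n k,
    MvPolynomial.monomial (Finsupp.equivFunOnFinite.symm (Fin.tail α))
      (c α * Nat.multinomial univ α)
  have hevalP : ∀ y, MvPolynomial.eval y P
      = ∑ α ∈ multIdx n k, c α * (Nat.multinomial univ α * ∏ i, y i ^ Fin.tail α i) := by
    intro y
    simp [P, MvPolynomial.eval_monomial, Finsupp.prod_fintype, mul_assoc]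
  have hP : P * (1 + ∑ i, MvPolynomial.X i) = 0 := by
    refine MvPolynomial.funext fun y => ?_
    by_cases hy : 1 + ∑ i, y i = 0
    · simp [hy]
    · have h := hc ((1 + ∑ i, y i)⁻¹ • y)
      rw [sum_congr rfl fun α hα => by rw [bern_inv_smul hα hy, mul_left_comm], ← mul_sum,
        ← hevalP] at h
      simp [(mul_eq_zero.mp h).resolve_left (pow_ne_zero k (inv_ne_zero hy))]
  have hP0 : P = 0 := by
    refine (mul_eq_zero.mp hP).resolve_right fun h => ?_
    simpa using congrArg MvPolynomial.constantCoeff h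
  intro α hα
  have hcoeff := congrArg (MvPolynomial.coeff (Finsupp.equivFunOnFinite.symm (Fin.tail α))) hP0
  rw [MvPolynomial.coeff_sum, sum_eq_single α] at hcoeff
  · simpa [(Nat.multinomial_pos univ α).ne'] using hcoeff
  · intro β hβ hne
    rw [MvPolynomial.coeff_monomial, if_neg]
    exact fun h => hne (tail_injOn_multIdx n k hβ hα (Finsupp.equivFunOnFinite.symm.injective h))
  · exact fun h => absurd hα h

lemma eq_of_sum_mul_bern_eq {n k : ℕ} {c d : (Fin (n+1) → ℕ) → ℝ}
    (h : ∀ x, ∑ α ∈ multIdx n k, c α * bern n k α x = ∑ α ∈ multIdx n k, d α * bern n k α x) :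
    ∀ α ∈ multIdx n k, c α = d α := by
  have := eq_zero_of_sum_mul_bern_eq_zero (k := k) (c := c - d) fun x => by
    simp only [Pi.sub_apply, sub_mul, sum_sub_distrib, h, sub_self]
  exact fun α hα => sub_eq_zero.mp (this α hα)

/-- The multivariate Vandermonde identity `∑_β ∏ C(αᵢ, βᵢ) = C(k, l)`, read off from the degree
elevation of the constant `1`. -/
lemma sum_elevWeight {n l k : ℕ} (hlk : l ≤ k) {α : Fin (n+1) → ℕ} (hα : α ∈ multIdx n k) :
    ∑ β ∈ multIdx n l, elevWeight l k α β = 1 := by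
  have := eq_of_sum_mul_bern_eq (c := elevate l k fun _ => 1) (d := fun _ => 1) (fun x => by
    rw [← sum_mul_bern_eq_sum_elevate_mul_bern hlk]
    simp only [one_mul, sum_bern]) α hα
  simpa [elevate] using this

lemma Nat.multinomial_mul_prod_descFactorial {ι : Type*} (s : Finset ι) (a β : ι → ℕ) :
    Nat.multinomial s β * ∏ i ∈ s, (a i).descFactorial (β i)
      = (∑ i ∈ s, β i).factorial * ∏ i ∈ s, (a i).choose (β i) := by
  simp only [Nat.descFactorial_eq_factorial_mul_choose, prod_mul_distrib]
  rw [← mul_assoc, mul_comm (Nat.multinomial s β), Nat.multinomial_spec]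

lemma descFactorial_mul_elevWeight {n l k : ℕ} (hlk : l ≤ k) (α : Fin (n+1) → ℕ)
    {β : Fin (n+1) → ℕ} (hβ : β ∈ multIdx n l) :
    (k.descFactorial l : ℝ) * elevWeight l k α β
      = Nat.multinomial univ β * ∏ i, ((α i).descFactorial (β i) : ℝ) := by
  have h := Nat.multinomial_mul_prod_descFactorial univ α β
  rw [mem_multIdx.mp hβ] at h
  have h' : (Nat.multinomial univ β : ℝ) * ∏ i, ((α i).descFactorial (β i) : ℝ)
      = l.factorial * ∏ i, ((α i).choose (β i) : ℝ) := by exact_mod_cast h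
  have hchoose : (k.choose l : ℝ) ≠ 0 := by exact_mod_cast (Nat.choose_pos hlk).ne'
  rw [h', elevWeight, Nat.descFactorial_eq_factorial_mul_choose]
  push_cast
  field_simp

theorem Nat.pow_succ_le_descFactorial_add (t m : ℕ) :
    t ^ (m + 1) ≤ t.descFactorial (m + 1) + (m + 1).choose 2 * t ^ m := by
  induction m with
  | zero => simp
  | succ m ih =>
    have hdesc : t * t.descFactorial (m + 1)
        ≤ t.descFactorial (m + 2) + (m + 1) * t ^ (m + 1) := by
      rw [Nat.descFactorial_succ t (m + 1)]
      calc t * t.descFactorial (m + 1)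
          ≤ (t - (m + 1) + (m + 1)) * t.descFactorial (m + 1) :=
            Nat.mul_le_mul_right _ le_tsub_add
        _ ≤ (t - (m + 1)) * t.descFactorial (m + 1) + (m + 1) * t ^ (m + 1) := by
            rw [add_mul]; gcongr; exact Nat.descFactorial_le_pow t (m + 1)
    calc t ^ (m + 2) = t * t ^ (m + 1) := by ring
      _ ≤ t * (t.descFactorial (m + 1) + (m + 1).choose 2 * t ^ m) := Nat.mul_le_mul_left t ih
      _ = t * t.descFactorial (m + 1) + (m + 1).choose 2 * t ^ (m + 1) := by ring
      _ ≤ t.descFactorial (m + 2) + ((m + 1) + (m + 1).choose 2) * t ^ (m + 1) := by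
          rw [add_mul, ← add_assoc]; gcongr
      _ = t.descFactorial (m + 2) + (m + 2).choose 2 * t ^ (m + 1) := by
          rw [Nat.choose_succ_succ' (m + 1) 1, Nat.choose_one_right]

lemma baryCoord_grid {n k : ℕ} (hk : k ≠ 0) {α : Fin (n+1) → ℕ} (hα : α ∈ multIdx n k) :
    baryCoord (fun i => (α i.succ : ℝ) / k) = fun i => (α i : ℝ) / k := by
  have hsum : (α 0 : ℝ) + ∑ i : Fin n, (α i.succ : ℝ) = k := by
    exact_mod_cast (Fin.sum_univ_succ α).symm.trans (mem_multIdx.mp hα)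
  ext i
  refine Fin.cases ?_ (fun i => ?_) i
  · simp only [baryCoord, Fin.cons_zero, ← sum_div]
    field_simp
    linarith
  · simp [baryCoord]

lemma grid_mem_stdSimp {n k : ℕ} (hk : k ≠ 0) {α : Fin (n+1) → ℕ} (hα : α ∈ multIdx n k) :
    (fun i => (α i.succ : ℝ) / k) ∈ stdSimp n := by
  refine ⟨fun i => by positivity, ?_⟩
  have h0 := congrFun (baryCoord_grid hk hα) 0
  simp only [baryCoord, Fin.cons_zero] at h0
  have : (0 : ℝ) ≤ α 0 / k := by positivity
  linarith

lemma pow_mul_bern_grid {n l k : ℕ} (hk : k ≠ 0) {α : Fin (n+1) → ℕ} (hα : α ∈ multIdx n k)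
    {β : Fin (n+1) → ℕ} (hβ : β ∈ multIdx n l) :
    (k : ℝ) ^ l * bern n l β (fun i => (α i.succ : ℝ) / k)
      = Nat.multinomial univ β * ∏ i, (α i : ℝ) ^ β i := by
  rw [bern_eq_multinomial_mul_prod hβ, baryCoord_grid hk hα]
  simp only [div_pow, prod_div_distrib, prod_pow_eq_pow_sum, mem_multIdx.mp hβ]
  field_simp

lemma sum_mul_le_sum_mul_add {ι : Type*} {s : Finset ι} {b u v : ι → ℝ} {M : ℝ}
    (hb : ∀ i ∈ s, |b i| ≤ M) (huv : ∀ i ∈ s, u i ≤ v i) :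
    ∑ i ∈ s, b i * v i ≤ ∑ i ∈ s, b i * u i + M * (∑ i ∈ s, v i - ∑ i ∈ s, u i) := by
  have : ∑ i ∈ s, b i * v i - ∑ i ∈ s, b i * u i ≤ M * (∑ i ∈ s, v i - ∑ i ∈ s, u i) :=
    calc ∑ i ∈ s, b i * v i - ∑ i ∈ s, b i * u i = ∑ i ∈ s, b i * (v i - u i) := by
          simp only [mul_sub, sum_sub_distrib]
      _ ≤ ∑ i ∈ s, M * (v i - u i) := sum_le_sum fun i hi =>
          mul_le_mul_of_nonneg_right ((le_abs_self _).trans (hb i hi)) (sub_nonneg.mpr (huv i hi))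
      _ = M * (∑ i ∈ s, v i - ∑ i ∈ s, u i) := by rw [← mul_sum, sum_sub_distrib]
  linarith

lemma pow_mul_le_descFactorial_mul_elevate_add {n l k : ℕ} (hlk : l ≤ k) (hk : k ≠ 0)
    {b : (Fin (n+1) → ℕ) → ℝ} {M m : ℝ} (hb : ∀ β ∈ multIdx n l, |b β| ≤ M)
    (hm : ∀ x ∈ stdSimp n, m ≤ ∑ β ∈ multIdx n l, b β * bern n l β x)
    {α : Fin (n+1) → ℕ} (hα : α ∈ multIdx n k) :
    (k : ℝ) ^ l * m
      ≤ k.descFactorial l * elevate l k b α + M * ((k : ℝ) ^ l - k.descFactorial l) := by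
  set x : Fin n → ℝ := fun i => (α i.succ : ℝ) / k
  set u : (Fin (n+1) → ℕ) → ℝ := fun β => k.descFactorial l * elevWeight l k α β
  set v : (Fin (n+1) → ℕ) → ℝ := fun β => (k : ℝ) ^ l * bern n l β x
  have huv : ∀ β ∈ multIdx n l, u β ≤ v β := by
    intro β hβ
    simp only [u, v, x, descFactorial_mul_elevWeight hlk α hβ, pow_mul_bern_grid hk hα hβ]
    gcongr with i
    exact_mod_cast Nat.descFactorial_le_pow _ _
  have hsu : ∑ β ∈ multIdx n l, u β = k.descFactorial l := by
    rw [← mul_sum, sum_elevWeight hlk hα, mul_one]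
  have hsv : ∑ β ∈ multIdx n l, v β = (k : ℝ) ^ l := by
    rw [← mul_sum, sum_bern, mul_one]
  calc (k : ℝ) ^ l * m ≤ (k : ℝ) ^ l * ∑ β ∈ multIdx n l, b β * bern n l β x :=
        mul_le_mul_of_nonneg_left (hm x (grid_mem_stdSimp hk hα)) (by positivity)
    _ = ∑ β ∈ multIdx n l, b β * v β := by
        rw [mul_sum]; exact sum_congr rfl fun β _ => mul_left_comm _ _ _
    _ ≤ ∑ β ∈ multIdx n l, b β * u β + M * (∑ β ∈ multIdx n l, v β - ∑ β ∈ multIdx n l, u β) :=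
        sum_mul_le_sum_mul_add hb huv
    _ = k.descFactorial l * elevate l k b α + M * ((k : ℝ) ^ l - k.descFactorial l) := by
        rw [hsu, hsv, elevate, mul_sum]
        congr 1
        exact sum_congr rfl fun β _ => mul_left_comm _ _ _

lemma elevate_pos {n l k : ℕ} (hl : 0 < l) (hlk : l ≤ k)
    {b : (Fin (n+1) → ℕ) → ℝ} {M m : ℝ} (hb : ∀ β ∈ multIdx n l, |b β| ≤ M)
    (hm : ∀ x ∈ stdSimp n, m ≤ ∑ β ∈ multIdx n l, b β * bern n l β x)
    (hkm : l.choose 2 * M < k * m) {α : Fin (n+1) → ℕ} (hα : α ∈ multIdx n k) :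
    0 < elevate l k b α := by
  have hk : k ≠ 0 := by omega
  have hM : 0 ≤ M := by
    obtain ⟨β, hβ⟩ := multIdx_nonempty n l
    exact (abs_nonneg _).trans (hb β hβ)
  have hdesc : (0 : ℝ) < k.descFactorial l := by
    exact_mod_cast Nat.descFactorial_pos.mpr hlk
  obtain ⟨l, rfl⟩ : ∃ l', l = l' + 1 := ⟨l - 1, by omega⟩
  have hgap : (k : ℝ) ^ (l + 1) - k.descFactorial (l + 1) ≤ (l + 1).choose 2 * (k : ℝ) ^ l := by
    have := (Nat.cast_le (α := ℝ)).mpr (Nat.pow_succ_le_descFactorial_add k l)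
    push_cast at this
    linarith
  have hmain := pow_mul_le_descFactorial_mul_elevate_add hlk hk hb hm hα
  have hpos : 0 < (k : ℝ) ^ l * (k * m - (l + 1).choose 2 * M) := by
    have : (0 : ℝ) < k ^ l := by positivity
    exact mul_pos this (by linarith)
  have hpow : (k : ℝ) ^ (l + 1) = k ^ l * k := pow_succ _ _
  rw [hpow] at hmain hgap
  refine pos_of_mul_pos_right (a := (k.descFactorial (l + 1) : ℝ)) ?_ hdesc.le
  linarith [mul_le_mul_of_nonneg_left hgap hM]

lemma le_of_choose_two_mul_lt {l k : ℕ} {M m : ℝ} (hm : 0 < m) (hmM : m ≤ M)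
    (h : (l.choose 2 : ℝ) * M < k * m) : l ≤ k := by
  have hchoose : (l : ℝ) - 1 ≤ l.choose 2 := by
    cases l with
    | zero => simp
    | succ j =>
      rw [Nat.choose_succ_succ', Nat.choose_one_right]
      push_cast
      linarith [(j.choose 2).cast_nonneg (α := ℝ)]
  have : ((l : ℝ) - 1) * m < k * m :=
    calc ((l : ℝ) - 1) * m ≤ l.choose 2 * m := by gcongr
      _ ≤ l.choose 2 * M := by gcongr
      _ < k * m := h
  have : (l : ℝ) < k + 1 := by linarith [lt_of_mul_lt_mul_right this hm.le]
  exact Nat.lt_succ_iff.mp (by exact_mod_cast this)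

lemma zero_mem_stdSimp (n : ℕ) : (0 : Fin n → ℝ) ∈ stdSimp n :=
  ⟨fun _ => le_rfl, by simp⟩

lemma isCompact_stdSimp (n : ℕ) : IsCompact (stdSimp n) := by
  refine (isCompact_Icc (a := (0 : Fin n → ℝ)) (b := 1)).of_isClosed_subset ?_ ?_
  · have : stdSimp n = (⋂ i, {x : Fin n → ℝ | 0 ≤ x i}) ∩ {x | ∑ i, x i ≤ 1} := by
      ext x; simp [stdSimp]
    rw [this]
    exact (isClosed_iInter fun i => isClosed_le continuous_const (continuous_apply i)).inter
      (isClosed_le (continuous_finsetSum _ fun i _ => continuous_apply i) continuous_const)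
  · rintro x ⟨hx, hsum⟩
    exact ⟨hx, fun i => (single_le_sum (fun j _ => hx j) (mem_univ i)).trans hsum⟩

lemma IsCompact.sInf_image_pos {α : Type*} [TopologicalSpace α] {s : Set α} {f : α → ℝ}
    (hs : IsCompact s) (hne : s.Nonempty) (hf : ContinuousOn f s) (hpos : ∀ x ∈ s, 0 < f x) :
    0 < sInf (f '' s) := by
  obtain ⟨x, hx, hfx⟩ := (hs.image_of_continuousOn hf).sInf_mem (hne.image f)
  exact hfx ▸ hpos x hx

theorem stmt17_general (n l k : ℕ) (hl : 2 ≤ l)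
    (p q : MvPolynomial (Fin n) ℝ)
    (bl bk ck : (Fin (n+1) → ℕ) → ℝ)
    (hrepl : ∀ x, MvPolynomial.eval x p = ∑ α ∈ multIdx n l, bl α * bern n l α x)
    (hrepk : ∀ x, MvPolynomial.eval x p = ∑ α ∈ multIdx n k, bk α * bern n k α x)
    (hck : ∀ α ∈ multIdx n k, 0 < ck α)
    (hqpos : ∀ x ∈ stdSimp n, 0 < MvPolynomial.eval x q)
    (hfpos : ∀ x ∈ stdSimp n, 0 < MvPolynomial.eval x p / MvPolynomial.eval x q)
    (pmin : ℝ) (hpmin : pmin = sInf ((fun x => MvPolynomial.eval x p) '' stdSimp n))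
    (hk : (k : ℝ) > ((l : ℝ) * ((l : ℝ) - 1) / 2) *
      ((multIdx n l).sup' (multIdx_nonempty n l) (fun α => |bl α|)) / pmin) :
    ∀ α ∈ multIdx n k, 0 < bk α / ck α := by
  set M := (multIdx n l).sup' (multIdx_nonempty n l) fun α => |bl α|
  have hblM : ∀ β ∈ multIdx n l, |bl β| ≤ M := fun β hβ => le_sup' (fun α => |bl α|) hβ
  have hp : ∀ x ∈ stdSimp n, 0 < MvPolynomial.eval x p := fun x hx =>
    (div_pos_iff_of_pos_right (hqpos x hx)).mp (hfpos x hx)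
  have hpmin_pos : 0 < pmin := hpmin ▸ (isCompact_stdSimp n).sInf_image_pos
    ⟨0, zero_mem_stdSimp n⟩ (MvPolynomial.continuous_eval p).continuousOn hp
  have hpmin_le : ∀ x ∈ stdSimp n, pmin ≤ ∑ β ∈ multIdx n l, bl β * bern n l β x :=
    fun x hx => hrepl x ▸ hpmin ▸ csInf_le
      ((isCompact_stdSimp n).image (MvPolynomial.continuous_eval p)).bddBelow
      (Set.mem_image_of_mem _ hx)
  have hpmin_M : pmin ≤ M :=
    (hpmin_le 0 (zero_mem_stdSimp n)).trans (sum_mul_bern_le hblM (zero_mem_stdSimp n))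
  have hkm : (l.choose 2 : ℝ) * M < k * pmin := by
    rw [Nat.cast_choose_two]
    rwa [gt_iff_lt, div_lt_iff₀ hpmin_pos] at hk
  have hlk : l ≤ k := le_of_choose_two_mul_lt hpmin_pos hpmin_M hkm
  have hbk : ∀ α ∈ multIdx n k, bk α = elevate l k bl α := eq_of_sum_mul_bern_eq fun x => by
    rw [← hrepk, hrepl, sum_mul_bern_eq_sum_elevate_mul_bern hlk]
  intro α hα
  rw [hbk α hα]
  exact div_pos (elevate_pos (by omega) hlk hblM hpmin_le hkm hα) (hck α hα)

/-- dimension-independent global certificate for rational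
functions. -/
theorem stmt17 (n l k : ℕ) (hn : 1 ≤ n) (hl : 2 ≤ l)
    (p q : MvPolynomial (Fin n) ℝ)
    (hdegp : p.totalDegree = l) (hdegq : q.totalDegree = l)
    (bl bk ck : (Fin (n+1) → ℕ) → ℝ)
    (hrepl : ∀ x, MvPolynomial.eval x p = ∑ α ∈ multIdx n l, bl α * bern n l α x)
    (hrepk : ∀ x, MvPolynomial.eval x p = ∑ α ∈ multIdx n k, bk α * bern n k α x)
    (hrepqk : ∀ x, MvPolynomial.eval x q = ∑ α ∈ multIdx n k, ck α * bern n k α x)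
    (hck : ∀ α ∈ multIdx n k, 0 < ck α)
    (hqpos : ∀ x ∈ stdSimp n, 0 < MvPolynomial.eval x q)
    (hfpos : ∀ x ∈ stdSimp n, 0 < MvPolynomial.eval x p / MvPolynomial.eval x q)
    (pmin : ℝ) (hpmin : pmin = sInf ((fun x => MvPolynomial.eval x p) '' stdSimp n))
    (hk : (k : ℝ) > ((l : ℝ) * ((l : ℝ) - 1) / 2) *
      ((multIdx n l).sup' (multIdx_nonempty n l) (fun α => |bl α|)) / pmin) :
    ∀ α ∈ multIdx n k, 0 < bk α / ck α :=
  stmt17_general n l k hl p q bl bk ck hrepl hrepk hck hqpos hfpos pmin hpmin hk
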